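/- For all s ≥ 3 and j ∈ {1,2,3}, the chromatic index of H^{-2,s}_{1,j} equals s. -/

import Mathlib

/-- The integral sum graph on vertex set `{r, ..., s} ⊆ ℤ`:
distinct `u, v` are adjacent iff `u + v` also lies in `{r, ..., s}`. -/
def intervalSumGraph (r s : ℤ) : SimpleGraph ℤ where
  Adj u v := u ≠ v ∧ u ∈ Set.Icc r s ∧ v ∈ Set.Icc r s ∧ u + v ∈ Set.Icc r s
  symm := ⟨by
    rintro u v ⟨h1, h2, h3, h4⟩
    exact ⟨h1.symm, h3, h2, by rwa [add_comm]⟩⟩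
  loopless := ⟨fun u h => h.1 rfl⟩

/-- The graph `H^{-i,s}_{m,j}`: obtained from the integral sum graph `G_{-i,s}`
by deleting the vertices `-m` and `j` and all edges whose endpoint labels sum
to `-m` or to `j`. -/
def HGraph (i s m j : ℤ) : SimpleGraph ℤ where
  Adj u v := u ≠ v ∧ u ∈ Set.Icc (-i) s ∧ v ∈ Set.Icc (-i) s ∧ u + v ∈ Set.Icc (-i) s ∧
    u ≠ -m ∧ v ≠ -m ∧ u ≠ j ∧ v ≠ j ∧ u + v ≠ -m ∧ u + v ≠ j
  symm := ⟨by
    rintro u v ⟨h1, h2, h3, h4, h5, h6, h7, h8, h9, h10⟩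
    exact ⟨h1.symm, h3, h2, by rwa [add_comm], h6, h5, h8, h7,
      by rwa [add_comm], by rwa [add_comm]⟩⟩
  loopless := ⟨fun u h => h.1 rfl⟩

/-- The chromatic index of a graph: the least `n` such that there is a proper
edge coloring with `n` colors (distinct edges sharing a vertex get distinct colors). -/
noncomputable def chromaticIndex {V : Type*} (G : SimpleGraph V) : ℕ :=
  sInf {n : ℕ | ∃ c : Sym2 V → Fin n,
    ∀ e ∈ G.edgeSet, ∀ f ∈ G.edgeSet, e ≠ f → (∃ v, v ∈ e ∧ v ∈ f) → c e ≠ c f}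

/-- The sum of the two endpoint labels of an edge. -/
def edgeSum (e : Sym2 ℤ) : ℤ := Sym2.lift ⟨fun a b => a + b, fun a b => add_comm a b⟩ e

/-- The edge-sum chromatic number: the number of nonempty edge-sum color classes. -/
noncomputable def edgeSumChromatic (G : SimpleGraph ℤ) : ℕ :=
  {k : ℤ | ∃ e ∈ G.edgeSet, edgeSum e = k}.ncard

/-!
Vertex `0` of `H^{-2,s}_{1,j}` is adjacent to `-2` and to every `k ∈ {1, …, s} \ {j}`, so it has
degree `s` and at least `s` colours are needed. Conversely, colouring each edge by the sum of its
endpoints is proper, since two edges at a common vertex with the same sum share both endpoints.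
The sums occurring are `-2`, `0` and `{1, …, s} \ {j}`; recolouring the three edges `{-2, 0}`,
`{-2, 2}` and `{2, s - 2}` removes the two surplus values and leaves an `s`-colouring.
-/

section EdgeColoring

variable {V α : Type*} {G : SimpleGraph V}

def IsProperEdgeColoring (G : SimpleGraph V) (c : Sym2 V → α) : Prop :=
  ∀ e ∈ G.edgeSet, ∀ f ∈ G.edgeSet, e ≠ f → (∃ v, v ∈ e ∧ v ∈ f) → c e ≠ c f

lemma isProperEdgeColoring_of_injective_at {c : Sym2 V → α}
    (h : ∀ ⦃u a b⦄, G.Adj u a → G.Adj u b → c s(u, a) = c s(u, b) → a = b) :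
    IsProperEdgeColoring G c := by
  rintro e he f hf hef ⟨v, hve, hvf⟩ hc
  obtain ⟨a, rfl⟩ := Sym2.mem_iff_exists.mp hve
  obtain ⟨b, rfl⟩ := Sym2.mem_iff_exists.mp hvf
  exact hef (congrArg _ (h he hf hc))

lemma exists_fin_coloring_of_mapsTo {c : Sym2 V → α} (hc : IsProperEdgeColoring G c)
    {S : Finset α} (hS : S.Nonempty) (hmaps : Set.MapsTo c G.edgeSet S) :
    ∃ c' : Sym2 V → Fin S.card, IsProperEdgeColoring G c' := by
  classical
  obtain ⟨x₀, hx₀⟩ := hS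
  let toFin : α → Fin S.card := fun x => S.equivFin (if h : x ∈ S then ⟨x, h⟩ else ⟨x₀, hx₀⟩)
  refine ⟨toFin ∘ c, fun e he f hf hef hv hcef => hc e he f hf hef hv ?_⟩
  have h := S.equivFin.injective hcef
  rw [dif_pos (Finset.mem_coe.mp (hmaps he)), dif_pos (Finset.mem_coe.mp (hmaps hf))] at h
  exact congrArg Subtype.val h

lemma card_le_of_isProperEdgeColoring {n : ℕ} {c : Sym2 V → Fin n}
    (hc : IsProperEdgeColoring G c) {v : V} {K : Finset V} (hK : ↑K ⊆ G.neighborSet v) :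
    K.card ≤ n := by
  have hinj : Set.InjOn (fun k => c s(v, k)) K := by
    intro k hk k' hk' hkk'
    by_contra hne
    exact hc _ (hK hk) _ (hK hk') (mt Sym2.congr_right.mp hne)
      ⟨v, Sym2.mem_mk_left v k, Sym2.mem_mk_left v k'⟩ hkk'
  simpa using Finset.card_le_card_of_injOn _ (fun k _ => Finset.mem_univ _) hinj

theorem chromaticIndex_eq_of_isProperEdgeColoring {n : ℕ} {c : Sym2 V → Fin n}
    (hc : IsProperEdgeColoring G c) {v : V} {K : Finset V} (hK : ↑K ⊆ G.neighborSet v)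
    (hn : n ≤ K.card) : chromaticIndex G = n :=
  le_antisymm (Nat.sInf_le ⟨c, hc⟩)
    (le_csInf ⟨n, c, hc⟩ fun _ ⟨_, hc'⟩ => hn.trans (card_le_of_isProperEdgeColoring hc' hK))

end EdgeColoring

lemma HGraph_adj_iff {i s m j u v : ℤ} :
    (HGraph i s m j).Adj u v ↔ u ≠ v ∧ (-i ≤ u ∧ u ≤ s) ∧ (-i ≤ v ∧ v ≤ s) ∧
      (-i ≤ u + v ∧ u + v ≤ s) ∧ u ≠ -m ∧ v ≠ -m ∧ u ≠ j ∧ v ≠ j ∧ u + v ≠ -m ∧ u + v ≠ j := by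
  simp only [HGraph, Set.mem_Icc]

section HGraphTwoOne

variable {s j : ℤ}

lemma subset_neighborSet_zero_HGraph (hs : 0 ≤ s) (hj : 0 < j) :
    ↑(insert (-2) ((Finset.Icc 1 s).erase j)) ⊆ (HGraph 2 s 1 j).neighborSet 0 := by
  intro k hk
  simp only [Finset.coe_insert, Finset.coe_erase, Finset.coe_Icc, Set.mem_insert_iff,
    Set.mem_sdiff, Set.mem_Icc, Set.mem_singleton_iff] at hk
  rw [SimpleGraph.mem_neighborSet, HGraph_adj_iff]
  omega

lemma card_insert_neg_two_Icc_erase (hj : 1 ≤ j) (hjs : j ≤ s) :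
    (insert (-2) ((Finset.Icc 1 s).erase j)).card = s.toNat := by
  have hj_mem : j ∈ Finset.Icc 1 s := Finset.mem_Icc.mpr ⟨hj, hjs⟩
  have h_neg_two : (-2 : ℤ) ∉ (Finset.Icc 1 s).erase j := by
    simp only [Finset.mem_erase, Finset.mem_Icc]
    omega
  rw [Finset.card_insert_of_notMem h_neg_two, Finset.card_erase_of_mem hj_mem, Int.card_Icc]
  omega

/-- The edge-sum colouring with the surplus sums `-2` (edge `{-2, 0}`) and `0` (edge `{-2, 2}`)
removed: `{-2, 0}` takes the colour `j` missing at `0`, `{-2, 2}` takes `s`, and the `s`-edge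
`{2, s - 2}`, now clashing at `2`, takes `j`. If `j = s` (so `j = s = 3`) the colour `s` is
taken at `-2`; then `{-2, 2}` takes `1`, free at `-2` and at `2` because `3` and `-1` are deleted. -/
def modifiedEdgeSumColoring (s j : ℤ) (e : Sym2 ℤ) : ℤ :=
  if e = s(-2, 2) then (if j = s then 1 else s)
  else if e = s(-2, 0) ∨ e = s(2, s - 2) then j
  else edgeSum e

lemma modifiedEdgeSumColoring_mk (x y : ℤ) :
    modifiedEdgeSumColoring s j s(x, y) =
      if (x = -2 ∧ y = 2) ∨ (x = 2 ∧ y = -2) then (if j = s then 1 else s)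
      else if ((x = -2 ∧ y = 0) ∨ (x = 0 ∧ y = -2)) ∨
          ((x = 2 ∧ y = s - 2) ∨ (x = s - 2 ∧ y = 2)) then j
      else x + y := by
  simp only [modifiedEdgeSumColoring, Sym2.eq_iff, edgeSum, Sym2.lift_mk]

lemma modifiedEdgeSumColoring_mem_Icc (hs : 3 ≤ s) (hj : 1 ≤ j ∧ j ≤ 3) {u v : ℤ}
    (h : (HGraph 2 s 1 j).Adj u v) : modifiedEdgeSumColoring s j s(u, v) ∈ Set.Icc 1 s := by
  rw [HGraph_adj_iff] at h
  rw [modifiedEdgeSumColoring_mk, Set.mem_Icc]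
  split_ifs <;> omega

lemma modifiedEdgeSumColoring_injective_at (hs : 3 ≤ s) (hj : 1 ≤ j ∧ j ≤ 3) {u a b : ℤ}
    (ha : (HGraph 2 s 1 j).Adj u a) (hb : (HGraph 2 s 1 j).Adj u b)
    (h : modifiedEdgeSumColoring s j s(u, a) = modifiedEdgeSumColoring s j s(u, b)) : a = b := by
  rw [HGraph_adj_iff] at ha hb
  rw [modifiedEdgeSumColoring_mk, modifiedEdgeSumColoring_mk] at h
  split_ifs at h <;> omega

end HGraphTwoOne

theorem chromaticIndex_H_2_s_1_j (s : ℕ) (hs : 3 ≤ s) (j : ℤ)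
    (hj : j ∈ ({1, 2, 3} : Set ℤ)) :
    chromaticIndex (HGraph 2 (s : ℤ) 1 j) = s := by
  have hj' : 1 ≤ j ∧ j ≤ 3 := by
    simp only [Set.mem_insert_iff, Set.mem_singleton_iff] at hj
    omega
  have hs' : (3 : ℤ) ≤ s := by exact_mod_cast hs
  have hproper : IsProperEdgeColoring (HGraph 2 s 1 j) (modifiedEdgeSumColoring s j) :=
    isProperEdgeColoring_of_injective_at fun _ _ _ => modifiedEdgeSumColoring_injective_at hs' hj'
  obtain ⟨c, hc⟩ := exists_fin_coloring_of_mapsTo hproper (S := Finset.Icc 1 (s : ℤ))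
    ⟨1, Finset.mem_Icc.mpr ⟨le_rfl, by omega⟩⟩ fun e he => by
      induction e using Sym2.ind
      simpa using modifiedEdgeSumColoring_mem_Icc hs' hj' he
  have hcard : (Finset.Icc 1 (s : ℤ)).card = s := by simp
  refine (chromaticIndex_eq_of_isProperEdgeColoring hc
    (subset_neighborSet_zero_HGraph (by omega) (by omega)) ?_).trans hcard
  rw [hcard, card_insert_neg_two_Icc_erase hj'.1 (by omega), Int.toNat_natCast]
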